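/- arXiv:2011.11187 — 3 statements merged into one kernel-verified Lean document; each statement's English description precedes it below -/
import Mathlib

section
/- For every finite graph G on n vertices, ν(G) = (n - e(G))/2, where e(G) is the minimum of e(G') over all pec decompositions G' of G. -/
variable {V : Type*}

/-- A matching of `G`, given as a set of edges: a set of edges of `G` that are
pairwise non-adjacent (no two distinct edges share a vertex). -/
def IsMatchingSet (G : SimpleGraph V) (M : Set (Sym2 V)) : Prop :=
  M ⊆ G.edgeSet ∧ ∀ e ∈ M, ∀ f ∈ M, e ≠ f → ∀ v : V, ¬(v ∈ e ∧ v ∈ f)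

/-- ν(G): the maximum size of a matching of `G`. -/
noncomputable def matchingNumber (G : SimpleGraph V) : ℕ :=
  sSup {n | ∃ M : Set (Sym2 V), IsMatchingSet G M ∧ M.ncard = n}

/-- λ(G): the maximum of |H| + |H'| over pairs (H, H') of disjoint matchings of `G`. -/
noncomputable def lambdaParam (G : SimpleGraph V) : ℕ :=
  sSup {n | ∃ H H' : Set (Sym2 V), IsMatchingSet G H ∧ IsMatchingSet G H' ∧
    Disjoint H H' ∧ H.ncard + H'.ncard = n}

/-- μ(G): the maximum of |H| over pairs (H, H') of disjoint matchings of `G` with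
|H| + |H'| = λ(G). -/
noncomputable def muParam (G : SimpleGraph V) : ℕ :=
  sSup {n | ∃ H H' : Set (Sym2 V), IsMatchingSet G H ∧ IsMatchingSet G H' ∧
    Disjoint H H' ∧ H.ncard + H'.ncard = lambdaParam G ∧ H.ncard = n}

/-- The degree of `v` in `G` (stated without decidability assumptions). -/
noncomputable def degree' (G : SimpleGraph V) (v : V) : ℕ := Nat.card (G.neighborSet v)

/-- The connected component `c` of `G` is a path: every vertex of `c` has degree at most 2
in `G`, and no cycle of `G` passes through a vertex of `c`. (An isolated vertex counts as a
path, namely an even path with zero edges.) -/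
def IsPathComponent (G : SimpleGraph V) (c : G.ConnectedComponent) : Prop :=
  (∀ v, G.connectedComponentMk v = c → degree' G v ≤ 2) ∧
  (∀ v, G.connectedComponentMk v = c → ∀ w : G.Walk v v, ¬ w.IsCycle)

/-- `G'` is a pec decomposition of `G`: a spanning subgraph of `G` each of whose connected
components is a path or a cycle with an even number of edges (equivalently, all degrees of
`G'` are at most 2 and every cycle of `G'` is even). -/
def IsPec (G G' : SimpleGraph V) : Prop :=
  G' ≤ G ∧ (∀ v, degree' G' v ≤ 2) ∧ ∀ (v : V) (w : G'.Walk v v), w.IsCycle → Even w.length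

/-- p(G'): the number of connected components of `G'` that are paths. -/
noncomputable def pathCount (G' : SimpleGraph V) : ℕ :=
  Nat.card {c : G'.ConnectedComponent // IsPathComponent G' c}

/-- e(G'): the number of connected components of `G'` that are paths with an even number of
edges, equivalently paths with an odd number of vertices. -/
noncomputable def evenPathCount (G' : SimpleGraph V) : ℕ :=
  Nat.card {c : G'.ConnectedComponent // IsPathComponent G' c ∧ Odd (Nat.card c.supp)}

/-- e(G): the minimum of e(G') over all pec decompositions `G'` of `G`. -/
noncomputable def eMin (G : SimpleGraph V) : ℕ :=
  sInf {n | ∃ G' : SimpleGraph V, IsPec G G' ∧ evenPathCount G' = n}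

/-- p(G): the minimum of p(G') over all pec decompositions `G'` of `G`. -/
noncomputable def pMin (G : SimpleGraph V) : ℕ :=
  sInf {n | ∃ G' : SimpleGraph V, IsPec G G' ∧ pathCount G' = n}

/-- e_p(G): the minimum of e(G') over all pec decompositions `G'` of `G` with p(G') = p(G). -/
noncomputable def epMin (G : SimpleGraph V) : ℕ :=
  sInf {n | ∃ G' : SimpleGraph V, IsPec G G' ∧ pathCount G' = pMin G ∧ evenPathCount G' = n}

/-!
Let `G'` have maximum degree two and only even cycles, and fix a maximum matching `M` of it. A
component containing `k` edges of `M` and `r` unmatched vertices has `2k + r` vertices. An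
unmatched vertex shares its component neither with a cycle (the cycle is then the whole
component, and an even cycle has a perfect matching, which would beat `M` there) nor with another
unmatched vertex (swapping matched edges along a path between them produces an augmenting edge).
So the components with an odd number of vertices are paths, one per unmatched vertex, and
`e(G') = n - 2ν(G')`. Since `ν(G') ≤ ν(G)` for `G' ≤ G`, and a maximum matching of `G` is itself a
pec decomposition of `G`, the minimum of `e(G')` is `n - 2ν(G)`.
-/

open SimpleGraph

def matchedVerts (M : Set (Sym2 V)) : Set V := {v | ∃ e ∈ M, v ∈ e}

def edgesMeeting (M : Set (Sym2 V)) (S : Set V) : Set (Sym2 V) := {e ∈ M | ∃ v ∈ e, v ∈ S}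

def IsMaximumMatching (G : SimpleGraph V) (M : Set (Sym2 V)) : Prop :=
  IsMatchingSet G M ∧ ∀ M', IsMatchingSet G M' → M'.ncard ≤ M.ncard

section Matchings

variable {G H : SimpleGraph V} {M P : Set (Sym2 V)}

lemma matchedVerts_insert (e : Sym2 V) :
    matchedVerts (insert e M) = {v | v ∈ e} ∪ matchedVerts M := by
  ext v
  simp [matchedVerts]

lemma matchedVerts_mono (h : M ⊆ P) : matchedVerts M ⊆ matchedVerts P :=
  fun _ ⟨e, he, hv⟩ => ⟨e, h he, hv⟩

lemma edgesMeeting_subset {S : Set V} : edgesMeeting M S ⊆ M :=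
  Set.sep_subset _ _

namespace IsMatchingSet

lemma mono (hM : IsMatchingSet G M) (hGH : G ≤ H) : IsMatchingSet H M :=
  ⟨hM.1.trans (edgeSet_mono hGH), hM.2⟩

lemma subset (hM : IsMatchingSet G M) (h : P ⊆ M) : IsMatchingSet G P :=
  ⟨h.trans hM.1, fun e he f hf => hM.2 e (h he) f (h hf)⟩

lemma adj (hM : IsMatchingSet G M) {a b : V} (h : s(a, b) ∈ M) : G.Adj a b :=
  hM.1 h

lemma eq_of_mem (hM : IsMatchingSet G M) {e f : Sym2 V} {v : V} (he : e ∈ M) (hf : f ∈ M)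
    (hve : v ∈ e) (hvf : v ∈ f) : e = f := by
  by_contra hef
  exact hM.2 e he f hf hef v ⟨hve, hvf⟩

lemma insert (hM : IsMatchingSet G M) {a b : V} (hab : G.Adj a b)
    (ha : a ∉ matchedVerts M) (hb : b ∉ matchedVerts M) :
    IsMatchingSet G (insert s(a, b) M) := by
  refine ⟨Set.insert_subset hab hM.1, ?_⟩
  have key : ∀ f ∈ M, ∀ v, v ∈ s(a, b) → v ∉ f := by
    rintro f hf v hv hvf
    rcases Sym2.mem_iff.1 hv with rfl | rfl
    exacts [ha ⟨f, hf, hvf⟩, hb ⟨f, hf, hvf⟩]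
  rintro e (rfl | he) f (rfl | hf) hef v ⟨hve, hvf⟩
  · exact hef rfl
  · exact key f hf v hve hvf
  · exact key e he v hvf hve
  · exact hM.2 e he f hf hef v ⟨hve, hvf⟩

lemma union (hM : IsMatchingSet G M) (hP : IsMatchingSet G P)
    (h : Disjoint (matchedVerts M) (matchedVerts P)) : IsMatchingSet G (M ∪ P) := by
  refine ⟨Set.union_subset hM.1 hP.1, ?_⟩
  rintro e (he | he) f (hf | hf) hef v ⟨hve, hvf⟩
  · exact hM.2 e he f hf hef v ⟨hve, hvf⟩
  · exact Set.disjoint_left.1 h ⟨e, he, hve⟩ ⟨f, hf, hvf⟩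
  · exact Set.disjoint_left.1 h ⟨f, hf, hvf⟩ ⟨e, he, hve⟩
  · exact hP.2 e he f hf hef v ⟨hve, hvf⟩

lemma notMem_matchedVerts_diff (hM : IsMatchingSet G M) {e : Sym2 V} {v : V} (he : e ∈ M)
    (hv : v ∈ e) : v ∉ matchedVerts (M \ {e}) :=
  fun ⟨_, hf, hvf⟩ => hf.2 (hM.eq_of_mem he hf.1 hv hvf).symm

lemma isMatchingSet_fromEdgeSet (hM : IsMatchingSet G M) : IsMatchingSet (fromEdgeSet M) M := by
  refine ⟨fun e he => ?_, hM.2⟩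
  rw [edgeSet_fromEdgeSet]
  exact ⟨he, G.not_isDiag_of_mem_edgeSet (hM.1 he)⟩

lemma eq_of_fromEdgeSet_adj (hM : IsMatchingSet G M) {v a b : V}
    (ha : (fromEdgeSet M).Adj v a) (hb : (fromEdgeSet M).Adj v b) : a = b := by
  rw [fromEdgeSet_adj] at ha hb
  exact Sym2.congr_right.1 (hM.eq_of_mem ha.1 hb.1 (Sym2.mem_mk_left v a) (Sym2.mem_mk_left v b))

variable [Finite V]

lemma ncard_matchedVerts (hM : IsMatchingSet G M) : (matchedVerts M).ncard = 2 * M.ncard := by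
  induction M, M.toFinite using Set.Finite.induction_on with
  | empty => simp [matchedVerts]
  | @insert e M heM _ ih =>
    obtain ⟨⟨x, y⟩, rfl⟩ := Quot.exists_rep e
    have hM' := hM.subset (Set.subset_insert _ M)
    have hxy : G.Adj x y := hM.adj (Set.mem_insert _ M)
    have hdisj : Disjoint {v | v ∈ s(x, y)} (matchedVerts M) := by
      refine Set.disjoint_left.2 fun v hv ⟨f, hf, hvf⟩ => heM ?_
      rw [hM.eq_of_mem (Set.mem_insert _ M) (Set.mem_insert_of_mem _ hf) hv hvf]
      exact hf
    have hpair : {v | v ∈ s(x, y)} = ({x, y} : Set V) := by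
      ext v
      simp [Sym2.mem_iff]
    rw [matchedVerts_insert, Set.ncard_union_eq hdisj, hpair, Set.ncard_pair hxy.ne,
      Set.ncard_insert_of_notMem heM, ih hM']
    ring

lemma ncard_le_matchingNumber (hM : IsMatchingSet G M) : M.ncard ≤ matchingNumber G := by
  refine le_csSup ⟨Nat.card (Sym2 V), ?_⟩ ⟨M, hM, rfl⟩
  rintro n ⟨N, -, rfl⟩
  exact Set.ncard_le_card N

lemma ncard_supp (hM : IsMatchingSet G M) (c : G.ConnectedComponent) :
    Nat.card c.supp = 2 * (edgesMeeting M c.supp).ncard + (c.supp \ matchedVerts M).ncard := by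
  have hinside : matchedVerts (edgesMeeting M c.supp) ⊆ c.supp := by
    rintro v ⟨e, ⟨heM, x, hxe, hx⟩, hve⟩
    obtain ⟨z, rfl⟩ := Sym2.mem_iff_exists.1 hxe
    rcases Sym2.mem_iff.1 hve with rfl | rfl
    · exact hx
    · rw [ConnectedComponent.mem_supp_iff] at hx ⊢
      rw [← hx]
      exact ConnectedComponent.connectedComponentMk_eq_of_adj (hM.adj heM).symm
  have hsplit : c.supp = matchedVerts (edgesMeeting M c.supp) ∪ (c.supp \ matchedVerts M) := by
    refine Set.Subset.antisymm (fun v hv => ?_) (Set.union_subset hinside Set.sdiff_subset)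
    by_cases hvM : v ∈ matchedVerts M
    · obtain ⟨e, he, hve⟩ := hvM
      exact Or.inl ⟨e, ⟨he, v, hve, hv⟩, hve⟩
    · exact Or.inr ⟨hv, hvM⟩
  have hdisj : Disjoint (matchedVerts (edgesMeeting M c.supp)) (c.supp \ matchedVerts M) :=
    Set.disjoint_of_subset_left (matchedVerts_mono edgesMeeting_subset) Set.disjoint_sdiff_right
  have hcard := Set.ncard_union_eq hdisj
  rw [← hsplit, (hM.subset edgesMeeting_subset).ncard_matchedVerts] at hcard
  rwa [Nat.card_coe_set_eq]

end IsMatchingSet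

end Matchings

section DegreeLeTwo

variable {G : SimpleGraph V}

lemma SimpleGraph.Reachable.mem_of_adj_mem {S : Set V}
    (hS : ∀ ⦃a b : V⦄, a ∈ S → G.Adj a b → b ∈ S) {u v : V} (h : G.Reachable u v)
    (hu : u ∈ S) : v ∈ S := by
  obtain ⟨p⟩ := h
  induction p with
  | nil => exact hu
  | cons hadj _ ih => exact ih (hS hu hadj)

lemma exists_isMatchingSet_matchedVerts_eq_of_isChain :
    ∀ l : List V, l.IsChain G.Adj → l.Nodup → Even l.length →
      ∃ P, IsMatchingSet G P ∧ matchedVerts P = {x | x ∈ l}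
  | [], _, _, _ => ⟨∅, ⟨Set.empty_subset _, by simp⟩, by simp [matchedVerts]⟩
  | [_], _, _, he => by simp at he
  | a :: b :: l, hc, hn, he => by
    obtain ⟨hab, hc⟩ := List.isChain_cons_cons.1 hc
    simp only [List.nodup_cons, List.mem_cons, not_or] at hn
    obtain ⟨P, hP, hPl⟩ := exists_isMatchingSet_matchedVerts_eq_of_isChain l hc.tail hn.2.2
      (by simpa [Nat.even_add_one] using he)
    refine ⟨insert s(a, b) P, hP.insert hab (by simp [hPl, hn.1.2]) (by simp [hPl, hn.2.1]), ?_⟩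
    ext v
    simp [matchedVerts_insert, hPl, Sym2.mem_iff, or_assoc]

lemma SimpleGraph.Walk.IsCycle.exists_isMatchingSet_matchedVerts_eq {y : V} {W : G.Walk y y}
    (hW : W.IsCycle) (heven : Even W.length) :
    ∃ P, IsMatchingSet G P ∧ matchedVerts P = {x | x ∈ W.support} := by
  obtain ⟨P, hP, hPW⟩ := exists_isMatchingSet_matchedVerts_eq_of_isChain W.support.tail
    W.isChain_adj_support.tail hW.support_nodup (by simpa using heven)
  refine ⟨P, hP, hPW.trans (Set.ext fun x => ⟨List.mem_of_mem_tail, fun hx => ?_⟩)⟩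
  rw [Set.mem_ofPred_eq, ← W.cons_tail_support, List.mem_cons] at hx
  rcases hx with rfl | hx
  · exact W.end_mem_tail_support hW.not_nil
  · exact hx

variable [Finite V]

lemma eq_or_eq_of_degree'_le_two {x a b z : V} (hdeg : degree' G x ≤ 2) (ha : G.Adj x a)
    (hb : G.Adj x b) (hab : a ≠ b) (hz : G.Adj x z) : z = a ∨ z = b := by
  by_contra! h
  have hsub : ({z, a, b} : Set V) ⊆ G.neighborSet x := by
    rintro v (rfl | rfl | rfl) <;> assumption
  have h3 : ({z, a, b} : Set V).ncard = 3 := by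
    rw [Set.ncard_insert_of_notMem (by simp [h.1, h.2]), Set.ncard_pair hab]
  have := Set.ncard_le_ncard hsub
  rw [degree', Nat.card_coe_set_eq] at hdeg
  omega

lemma SimpleGraph.Walk.IsCycle.mem_support_of_adj (hdeg : ∀ v, degree' G v ≤ 2) {y a z : V}
    {W : G.Walk y y} (hW : W.IsCycle) (ha : a ∈ W.support) (hz : G.Adj a z) :
    z ∈ W.support := by
  classical
  have hW' : (W.rotate a ha).IsCycle := hW.rotate ha
  rw [← W.mem_support_rotate_iff a ha]
  rcases eq_or_eq_of_degree'_le_two (hdeg a) (Walk.adj_snd hW'.not_nil)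
      (Walk.adj_penultimate hW'.not_nil).symm hW'.snd_ne_penultimate hz with h | h <;>
    exact h ▸ Walk.getVert_mem_support _ _

lemma SimpleGraph.Walk.IsCycle.supp_connectedComponentMk (hdeg : ∀ v, degree' G v ≤ 2)
    {y : V} {W : G.Walk y y} (hW : W.IsCycle) :
    (G.connectedComponentMk y).supp = {x | x ∈ W.support} := by
  classical
  ext x
  rw [ConnectedComponent.mem_supp_iff, ConnectedComponent.eq]
  exact ⟨fun h => h.symm.mem_of_adj_mem (fun _ _ ha hz => hW.mem_support_of_adj hdeg ha hz)
    W.start_mem_support, fun hx => (W.takeUntil x hx).reachable.symm⟩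

end DegreeLeTwo

section MaximumMatching

variable [Finite V] {G : SimpleGraph V} {M P : Set (Sym2 V)}

lemma exists_isMaximumMatching (G : SimpleGraph V) :
    ∃ M, IsMaximumMatching G M ∧ M.ncard = matchingNumber G := by
  obtain ⟨M, hM, hcard⟩ := Nat.sSup_mem (s := {n | ∃ M, IsMatchingSet G M ∧ M.ncard = n})
    ⟨0, ∅, ⟨Set.empty_subset _, by simp⟩, Set.ncard_empty _⟩
    ⟨Nat.card (Sym2 V), by rintro n ⟨N, -, rfl⟩; exact Set.ncard_le_card N⟩
  exact ⟨M, ⟨hM, fun N hN => hcard ▸ hN.ncard_le_matchingNumber⟩, hcard⟩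

lemma matchingNumber_mono {G' : SimpleGraph V} (h : G' ≤ G) :
    matchingNumber G' ≤ matchingNumber G := by
  obtain ⟨M, hM, hMcard⟩ := exists_isMaximumMatching G'
  exact hMcard ▸ (hM.1.mono h).ncard_le_matchingNumber

namespace IsMaximumMatching

lemma mem_matchedVerts_of_adj (hM : IsMaximumMatching G M) {u x : V} (hux : G.Adj u x)
    (hu : u ∉ matchedVerts M) : x ∈ matchedVerts M := by
  by_contra hx
  have := hM.2 _ (hM.1.insert hux hu hx)
  rw [Set.ncard_insert_of_notMem fun h => hu ⟨_, h, Sym2.mem_mk_left u x⟩] at this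
  omega

lemma swap (hM : IsMaximumMatching G M) {u x y : V} (hux : G.Adj u x)
    (hu : u ∉ matchedVerts M) (hxy : s(x, y) ∈ M) :
    IsMaximumMatching G (insert s(u, x) (M \ {s(x, y)})) := by
  refine ⟨(hM.1.subset Set.sdiff_subset).insert hux
    (fun h => hu (matchedVerts_mono Set.sdiff_subset h))
    (hM.1.notMem_matchedVerts_diff hxy (Sym2.mem_mk_left x y)), fun N hN => ?_⟩
  rw [Set.ncard_insert_of_notMem fun h => hu ⟨_, h.1, Sym2.mem_mk_left u x⟩,
    Set.ncard_sdiff_singleton_add_one hxy]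
  exact hM.2 N hN

lemma eq_of_isPath (hdeg : ∀ v, degree' G v ≤ 2) :
    ∀ {M : Set (Sym2 V)}, IsMaximumMatching G M → ∀ {u w : V}, u ∉ matchedVerts M →
      w ∉ matchedVerts M → ∀ p : G.Walk u w, p.IsPath → u = w
  | _, _, _, _, _, _, .nil, _ => rfl
  | M, hM, u, w, hu, hw, .cons (v := x) hux p, hp => by
    obtain ⟨e, he, hxe⟩ := hM.mem_matchedVerts_of_adj hux hu
    obtain ⟨y, rfl⟩ := Sym2.mem_iff_exists.1 hxe
    cases p with
    | nil => exact absurd ⟨_, he, hxe⟩ hw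
    | @cons _ z _ hxz r =>
      obtain ⟨hp, hup⟩ := (Walk.cons_isPath_iff _ _).1 hp
      have hzu : z ≠ u := fun h => hup (h ▸ List.mem_cons_of_mem _ r.start_mem_support)
      have hwu : w ≠ u := fun h => hup (h ▸ Walk.end_mem_support _)
      have hyu : y ≠ u := fun h => hu ⟨_, he, h ▸ Sym2.mem_mk_right x y⟩
      obtain rfl : z = y := (eq_or_eq_of_degree'_le_two (hdeg x) hux.symm (hM.1.adj he)
        hyu.symm hxz).resolve_left hzu
      have hxw : w ≠ x := fun h => hw ⟨_, he, h ▸ Sym2.mem_mk_left x z⟩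
      have hzM : z ∉ matchedVerts (insert s(u, x) (M \ {s(x, z)})) := by
        simp [matchedVerts_insert, Sym2.mem_iff, hzu, (hM.1.adj he).ne.symm,
          hM.1.notMem_matchedVerts_diff he (Sym2.mem_mk_right x z)]
      have hwM : w ∉ matchedVerts (insert s(u, x) (M \ {s(x, z)})) := by
        have hw' : w ∉ matchedVerts (M \ {s(x, z)}) :=
          fun h => hw (matchedVerts_mono Set.sdiff_subset h)
        simp [matchedVerts_insert, Sym2.mem_iff, hwu, hxw, hw']
      -- trading `s(x, z)` for `s(u, x)` keeps the matching maximum and leaves `z` unmatched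
      have hzw := eq_of_isPath hdeg (hM.swap hux hu he) hzM hwM r hp.of_cons
      exact absurd ⟨_, he, hzw ▸ Sym2.mem_mk_right x z⟩ hw

lemma eq_of_reachable (hdeg : ∀ v, degree' G v ≤ 2) (hM : IsMaximumMatching G M) {u w : V}
    (hu : u ∉ matchedVerts M) (hw : w ∉ matchedVerts M) (h : G.Reachable u w) : u = w := by
  classical
  obtain ⟨p⟩ := h
  exact hM.eq_of_isPath hdeg hu hw p.toPath p.toPath.2

lemma ncard_le_edgesMeeting (hM : IsMaximumMatching G M) (hP : IsMatchingSet G P) {S : Set V}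
    (hPS : matchedVerts P ⊆ S) : P.ncard ≤ (edgesMeeting M S).ncard := by
  have hdisj : Disjoint (matchedVerts (M \ edgesMeeting M S)) (matchedVerts P) :=
    Set.disjoint_left.2 fun v ⟨_, he, hve⟩ hvP => he.2 ⟨he.1, v, hve, hPS hvP⟩
  have hdisj' : Disjoint (M \ edgesMeeting M S) P := Set.disjoint_left.2 fun e heM heP =>
    Set.disjoint_left.1 hdisj ⟨e, heM, e.out_fst_mem⟩ ⟨e, heP, e.out_fst_mem⟩
  have hle := hM.2 _ ((hM.1.subset Set.sdiff_subset).union hP hdisj)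
  rw [Set.ncard_union_eq hdisj'] at hle
  have := Set.ncard_sdiff_add_ncard_of_subset (edgesMeeting_subset (M := M) (S := S))
  omega

lemma not_isCycle (hdeg : ∀ v, degree' G v ≤ 2) (hM : IsMaximumMatching G M) {u y : V}
    (hu : u ∉ matchedVerts M) (huy : G.Reachable u y) {W : G.Walk y y} (hW : W.IsCycle)
    (heven : Even W.length) : False := by
  obtain ⟨P, hP, hPW⟩ := hW.exists_isMatchingSet_matchedVerts_eq heven
  have hPc : matchedVerts P = (G.connectedComponentMk y).supp :=
    hPW.trans (hW.supp_connectedComponentMk hdeg).symm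
  have hle := hM.ncard_le_edgesMeeting hP hPc.le
  have hcount := hM.1.ncard_supp (G.connectedComponentMk y)
  have hpos : 0 < ((G.connectedComponentMk y).supp \ matchedVerts M).ncard :=
    (Set.ncard_pos).2 ⟨u, ConnectedComponent.sound huy, hu⟩
  have hPcard := hP.ncard_matchedVerts
  rw [hPc, ← Nat.card_coe_set_eq] at hPcard
  omega

lemma supp_diff_matchedVerts (hdeg : ∀ v, degree' G v ≤ 2) (hM : IsMaximumMatching G M)
    {u : V} (hu : u ∉ matchedVerts M) :
    (G.connectedComponentMk u).supp \ matchedVerts M = {u} := by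
  ext v
  refine ⟨fun ⟨hv, hvM⟩ => hM.eq_of_reachable hdeg hvM hu (ConnectedComponent.exact hv), ?_⟩
  rintro rfl
  exact ⟨rfl, hu⟩

lemma isPathComponent (hdeg : ∀ v, degree' G v ≤ 2)
    (heven : ∀ (v : V) (w : G.Walk v v), w.IsCycle → Even w.length)
    (hM : IsMaximumMatching G M) {u : V} (hu : u ∉ matchedVerts M) :
    IsPathComponent G (G.connectedComponentMk u) :=
  ⟨fun v _ => hdeg v, fun v hv W hW =>
    hM.not_isCycle hdeg hu (ConnectedComponent.exact hv).symm hW (heven v W hW)⟩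

end IsMaximumMatching

end MaximumMatching

section PecDecomposition

variable [Finite V] {G : SimpleGraph V} {M : Set (Sym2 V)}

lemma IsMatchingSet.isPec_fromEdgeSet (hM : IsMatchingSet G M) : IsPec G (fromEdgeSet M) := by
  refine ⟨(fromEdgeSet_le G).2 (Set.sdiff_subset.trans hM.1), fun v => ?_, fun v W hW => ?_⟩
  · have : degree' (fromEdgeSet M) v ≤ 1 := by
      rw [degree', Nat.card_coe_set_eq, Set.ncard_le_one_iff]
      exact fun ha hb => hM.eq_of_fromEdgeSet_adj ha hb
    omega
  · exact absurd (hM.eq_of_fromEdgeSet_adj (Walk.adj_snd hW.not_nil)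
      (Walk.adj_penultimate hW.not_nil).symm) hW.snd_ne_penultimate

lemma evenPathCount_add_two_mul_matchingNumber (hdeg : ∀ v, degree' G v ≤ 2)
    (heven : ∀ (v : V) (w : G.Walk v v), w.IsCycle → Even w.length) :
    evenPathCount G + 2 * matchingNumber G = Nat.card V := by
  obtain ⟨M, hM, hMcard⟩ := exists_isMaximumMatching G
  have hodd (c : G.ConnectedComponent) :
      Odd (Nat.card c.supp) ↔ Odd (c.supp \ matchedVerts M).ncard := by
    rw [hM.1.ncard_supp c, Nat.odd_iff, Nat.odd_iff]
    omega
  let f : ↥(matchedVerts M)ᶜ →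
      {c : G.ConnectedComponent // IsPathComponent G c ∧ Odd (Nat.card c.supp)} :=
    fun u => ⟨G.connectedComponentMk u, hM.isPathComponent hdeg heven u.2, by
      rw [hodd, hM.supp_diff_matchedVerts hdeg u.2, Set.ncard_singleton]
      exact odd_one⟩
  have hf : Function.Bijective f := by
    refine ⟨fun u v huv => Subtype.ext (hM.eq_of_reachable hdeg u.2 v.2
      (ConnectedComponent.exact (congrArg Subtype.val huv))), ?_⟩
    rintro ⟨c, -, hc⟩
    obtain ⟨u, hu⟩ := Set.nonempty_of_ncard_ne_zero ((hodd c).1 hc).pos.ne'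
    exact ⟨⟨u, hu.2⟩, Subtype.ext hu.1⟩
  have hU := Set.ncard_add_ncard_compl (matchedVerts M)
  rw [hM.1.ncard_matchedVerts, hMcard, ← Nat.card_coe_set_eq, Nat.card_eq_of_bijective f hf] at hU
  unfold evenPathCount
  omega

end PecDecomposition

/-- For every finite graph `G` on `n` vertices, ν(G) = (n − e(G))/2,
stated subtraction/division-free as 2·ν(G) + e(G) = n. -/
theorem stmt_1 [Fintype V] (G : SimpleGraph V) :
    2 * matchingNumber G + eMin G = Fintype.card V := by
  obtain ⟨M, hM, hMcard⟩ := exists_isMaximumMatching G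
  have hH := hM.1.isPec_fromEdgeSet
  obtain ⟨G', hG', hG'e⟩ : eMin G ∈ {n | ∃ G', IsPec G G' ∧ evenPathCount G' = n} :=
    Nat.sInf_mem ⟨_, _, hH, rfl⟩
  have hcountG' := evenPathCount_add_two_mul_matchingNumber hG'.2.1 hG'.2.2
  have hcountH := evenPathCount_add_two_mul_matchingNumber hH.2.1 hH.2.2
  have hνG' := matchingNumber_mono hG'.1
  have hνH := hM.1.isMatchingSet_fromEdgeSet.ncard_le_matchingNumber
  have heH : eMin G ≤ evenPathCount (fromEdgeSet M) := Nat.sInf_le ⟨_, hH, rfl⟩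
  rw [Nat.card_eq_fintype_card] at hcountG' hcountH
  omega
end

section
/- Let G be a finite connected graph and let M, H, H' be maximally intersecting matchings in G. Then every maximal M-H alternating chain in G is a path with an odd number of edges whose two end-edges belong to M. -/
/-!
Let `F` be a set of `M`-`H` alternating edges containing every edge of `M` that meets it.
Then `M ∆ F` is again a matching. So `F` cannot have more edges outside `M` than inside,
since `M` is maximum; and if the two counts agree (with `F ⊄ M`), `M ∆ F` is another maximum
matching that meets `H ∪ H'` at least as much as `M` and meets `H` strictly more,
contradicting (iii)–(iv). The edge set of an alternating cycle is such an `F` with equal counts.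
If a maximal alternating path starts with an edge outside `M`, its first vertex is not covered
by `M`: an `M`-edge there would either extend the path or close an alternating cycle with an
initial segment of it. Hence the edge set of the path is such an `F`, and if an end-edge lies
outside `M` it has at least as many edges outside `M` as inside, which is impossible.
-/

variable {V : Type*}

/-- A list of edges alternately lies in `A ∖ B` and `B ∖ A`. -/
def AltList (A B : Set (Sym2 V)) (l : List (Sym2 V)) : Prop :=
  (∀ e ∈ l, (e ∈ A ∧ e ∉ B) ∨ (e ∈ B ∧ e ∉ A)) ∧
  List.Chain' (fun e f => ¬(e ∈ A ↔ f ∈ A)) l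

/-- An `A`-`B` alternating path in `G`: a (nontrivial) path whose edges alternately lie in
`A ∖ B` and `B ∖ A`. -/
def IsAltPath (G : SimpleGraph V) (A B : Set (Sym2 V)) {u v : V} (p : G.Walk u v) : Prop :=
  0 < p.length ∧ p.IsPath ∧ AltList A B p.edges

/-- A maximal `A`-`B` alternating path: an alternating path that cannot be extended to a
longer alternating path at either of its ends. -/
def IsMaxAltPath (G : SimpleGraph V) (A B : Set (Sym2 V)) {u v : V} (p : G.Walk u v) : Prop :=
  IsAltPath G A B p ∧
  (∀ w, ∀ h : G.Adj w u, ¬ IsAltPath G A B (SimpleGraph.Walk.cons h p)) ∧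
  (∀ w, ∀ h : G.Adj w v, ¬ IsAltPath G A B (SimpleGraph.Walk.cons h p.reverse))

/-- `M` is a maximum matching of `G`. -/
def IsMaxMatching (G : SimpleGraph V) (M : Set (Sym2 V)) : Prop :=
  IsMatchingSet G M ∧ ∀ M' : Set (Sym2 V), IsMatchingSet G M' → M'.ncard ≤ M.ncard

/-- `(H, H')` is a pair of disjoint matchings of `G` with `|H| + |H'| = λ(G)` and
`|H| = μ(G)`. -/
def IsLambdaMuPair (G : SimpleGraph V) (H H' : Set (Sym2 V)) : Prop :=
  IsMatchingSet G H ∧ IsMatchingSet G H' ∧ Disjoint H H' ∧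
  H.ncard + H'.ncard = lambdaParam G ∧ H.ncard = muParam G

/-- The matchings `M`, `H`, `H'` are maximally intersecting:
(i) `M` is a maximum matching; (ii) `(H, H') ∈ Λ(G)` with `|H| = μ(G)`;
(iii) `|M ∩ (H ∪ H')|` is maximum among all such triples;
(iv) `|M ∩ H|` is maximum among all such triples also satisfying (iii). -/
def MaxIntersecting (G : SimpleGraph V) (M H H' : Set (Sym2 V)) : Prop :=
  IsMaxMatching G M ∧ IsLambdaMuPair G H H' ∧
  (∀ M₂ H₂ H₂' : Set (Sym2 V), IsMaxMatching G M₂ → IsLambdaMuPair G H₂ H₂' →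
    (M₂ ∩ (H₂ ∪ H₂')).ncard ≤ (M ∩ (H ∪ H')).ncard) ∧
  (∀ M₂ H₂ H₂' : Set (Sym2 V), IsMaxMatching G M₂ → IsLambdaMuPair G H₂ H₂' →
    (M₂ ∩ (H₂ ∪ H₂')).ncard = (M ∩ (H ∪ H')).ncard → (M₂ ∩ H₂).ncard ≤ (M ∩ H).ncard)

open SimpleGraph
open scoped symmDiff

def IsSwapClosed (M F : Set (Sym2 V)) : Prop :=
  ∀ f ∈ F, ∀ x ∈ f, ∀ g ∈ M, x ∈ g → g ∈ F

theorem Set.ncard_symmDiff_inter_add {α : Type*} [Finite α] (s t u : Set α) :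
    (s ∆ t ∩ u).ncard + (t ∩ s ∩ u).ncard = (s ∩ u).ncard + (t \ s ∩ u).ncard := by
  have hsplit : s ∆ t ∩ u = (s ∩ u) \ t ∪ (t \ s ∩ u) := by
    ext x
    simp only [Set.mem_inter_iff, Set.mem_union, Set.mem_sdiff, Set.mem_symmDiff]
    tauto
  have hinter : (s ∩ u) ∩ t = t ∩ s ∩ u := by
    ext x
    simp only [Set.mem_inter_iff]
    tauto
  rw [hsplit, Set.ncard_union_eq (Set.disjoint_left.mpr fun x hx hy => hx.2 hy.1.1),
    ← hinter, ← Set.ncard_inter_add_ncard_sdiff_eq_ncard (s ∩ u) t]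
  omega

theorem List.Nodup.ncard_setOf_mem_and {α : Type*} {l : List α} (hl : l.Nodup)
    (q : α → Prop) [DecidablePred q] : {x | x ∈ l ∧ q x}.ncard = l.countP (q ·) := by
  classical
  have : {x | x ∈ l ∧ q x} = ↑(l.filter (q ·)).toFinset := by
    ext x
    simp
  rw [this, Set.ncard_coe_finset, List.toFinset_card_of_nodup (hl.filter _),
    List.countP_eq_length_filter]

theorem List.Nodup.head?_ne_getLast? {α : Type*} {l : List α} (hl : l.Nodup)
    (hlen : 2 ≤ l.length) {a b : α} (ha : l.head? = some a) (hb : l.getLast? = some b) :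
    a ≠ b := by
  match l, hlen with
  | a' :: b' :: t, _ =>
    rintro rfl
    simp only [List.head?_cons, Option.some.injEq] at ha
    rw [List.getLast?_cons_cons] at hb
    exact (List.nodup_cons.mp hl).1 (ha ▸ List.mem_of_getLast? hb)

theorem List.countP_add_one_of_isChain_not_iff {α : Type*} {p : α → Prop} [DecidablePred p] :
    ∀ {l : List α} {a b : α}, l.IsChain (fun x y => ¬(p x ↔ p y)) →
      l.head? = some a → l.getLast? = some b →
      l.countP (p ·) + 1 = l.countP (¬p ·) + (if p a then 1 else 0) + (if p b then 1 else 0)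
  | [x], _, _, _, ha, hb => by
    simp only [List.head?_cons, List.getLast?_singleton, Option.some.injEq] at ha hb
    subst ha hb
    by_cases hx : p x <;> simp [hx]
  | x :: y :: t, _, _, hc, ha, hb => by
    obtain ⟨hxy, hc⟩ := List.isChain_cons_cons.mp hc
    have ih := List.countP_add_one_of_isChain_not_iff hc rfl (List.getLast?_cons_cons ▸ hb)
    simp only [List.head?_cons, Option.some.injEq] at ha
    subst ha
    by_cases hx : p x <;> by_cases hy : p y <;> simp [hx, hy] at hxy ih ⊢ <;> omega

namespace AltList

variable {A B : Set (Sym2 V)} {l : List (Sym2 V)}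

theorem subset_symmDiff (h : AltList A B l) : {e | e ∈ l} ⊆ A ∆ B :=
  fun e he => Set.mem_symmDiff.mpr (h.1 e he)

theorem reverse (h : AltList A B l) : AltList A B l.reverse :=
  ⟨fun e he => h.1 e (List.mem_reverse.mp he),
    List.isChain_reverse.mpr (h.2.imp fun _ _ hab hiff => hab hiff.symm)⟩

theorem of_isPrefix (h : AltList A B l) {l₁ : List (Sym2 V)} (hl : l₁ <+: l) : AltList A B l₁ :=
  ⟨fun e he => h.1 e (hl.subset he), List.IsChain.prefix h.2 hl⟩

theorem cons (h : AltList A B l) {e : Sym2 V} (heA : e ∈ A) (heB : e ∉ B)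
    (hl : ∀ f ∈ l.head?, f ∉ A) : AltList A B (e :: l) :=
  ⟨List.forall_mem_cons.mpr ⟨Or.inl ⟨heA, heB⟩, h.1⟩,
    List.isChain_cons.mpr ⟨fun f hf hiff => hl f hf (hiff.mp heA), h.2⟩⟩

theorem ncard_inter_add_one [DecidablePred (· ∈ A)] (h : AltList A B l) (hl : l.Nodup)
    {a b : Sym2 V} (ha : l.head? = some a) (hb : l.getLast? = some b) :
    ({e | e ∈ l} ∩ A).ncard + 1 =
      ({e | e ∈ l} \ A).ncard + (if a ∈ A then 1 else 0) + (if b ∈ A then 1 else 0) := by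
  rw [show {e | e ∈ l} ∩ A = {e | e ∈ l ∧ e ∈ A} from rfl, hl.ncard_setOf_mem_and,
    show {e | e ∈ l} \ A = {e | e ∈ l ∧ e ∉ A} from rfl, hl.ncard_setOf_mem_and]
  exact List.countP_add_one_of_isChain_not_iff h.2 ha hb

end AltList

section Matching

variable {G : SimpleGraph V} {M H : Set (Sym2 V)}

theorem IsMatchingSet.eq_of_mem_of_mem (hM : IsMatchingSet G M) {e f : Sym2 V} (he : e ∈ M)
    (hf : f ∈ M) {x : V} (hxe : x ∈ e) (hxf : x ∈ f) : e = f :=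
  by_contra fun hne => hM.2 e he f hf hne x ⟨hxe, hxf⟩

theorem IsMatchingSet.symmDiff {F : Set (Sym2 V)} (hM : IsMatchingSet G M)
    (hH : IsMatchingSet G H) (hFH : F \ M ⊆ H) (hF : IsSwapClosed M F) :
    IsMatchingSet G (M ∆ F) := by
  have hmixed : ∀ e ∈ M \ F, ∀ f ∈ F \ M, ∀ x, ¬(x ∈ e ∧ x ∈ f) :=
    fun e he f hf x hx => he.2 (hF f hf.1 x hx.2 e he.1 hx.1)
  refine ⟨?_, ?_⟩
  · rintro e (he | he)
    exacts [hM.1 he.1, hH.1 (hFH he)]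
  · rintro e (he | he) f (hf | hf) hef x hx
    · exact hM.2 e he.1 f hf.1 hef x hx
    · exact hmixed e he f hf x hx
    · exact hmixed f hf e he x hx.symm
    · exact hH.2 e (hFH he) f (hFH hf) hef x hx

variable [Finite V] {F : Set (Sym2 V)}

theorem IsMaxMatching.ncard_diff_le (hM : IsMaxMatching G M) (hH : IsMatchingSet G H)
    (hFH : F \ M ⊆ H) (hF : IsSwapClosed M F) : (F \ M).ncard ≤ (F ∩ M).ncard := by
  have hcard := Set.ncard_symmDiff_inter_add M F Set.univ
  simp only [Set.inter_univ] at hcard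
  have := hM.2 _ (hM.1.symmDiff hH hFH hF)
  omega

theorem MaxIntersecting.ncard_diff_lt {H' : Set (Sym2 V)} (hmax : MaxIntersecting G M H H')
    (hFMH : F ⊆ M ∆ H) (hF : IsSwapClosed M F) (hne : (F \ M).Nonempty) :
    (F \ M).ncard < (F ∩ M).ncard := by
  obtain ⟨hM, hpair, hiii, hiv⟩ := hmax
  have hFH : F \ M ⊆ H := fun f hf =>
    ((Set.mem_symmDiff.mp (hFMH hf.1)).resolve_left fun h => hf.2 h.1).1
  refine (hM.ncard_diff_le hpair.1 hFH hF).lt_of_ne fun heq => ?_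
  have hcard := Set.ncard_symmDiff_inter_add M F Set.univ
  simp only [Set.inter_univ] at hcard
  have hM' : IsMaxMatching G (M ∆ F) :=
    ⟨hM.1.symmDiff hpair.1 hFH hF, fun M' h => (hM.2 M' h).trans (by omega)⟩
  -- swapping along `F` keeps `|M ∩ (H ∪ H')|` but strictly increases `|M ∩ H|`
  have hunion := Set.ncard_symmDiff_inter_add M F (H ∪ H')
  rw [Set.inter_eq_left.mpr (hFH.trans Set.subset_union_left)] at hunion
  have hle : (F ∩ M ∩ (H ∪ H')).ncard ≤ (F ∩ M).ncard := Set.ncard_le_ncard Set.inter_subset_left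
  have hFMH' : F ∩ M ∩ H = ∅ := by
    ext x
    simp only [Set.mem_inter_iff, Set.mem_empty_iff_false, iff_false]
    rintro ⟨⟨hxF, hxM⟩, hxH⟩
    rcases Set.mem_symmDiff.mp (hFMH hxF) with h | h
    exacts [h.2 hxH, h.2 hxM]
  have hH := Set.ncard_symmDiff_inter_add M F H
  rw [Set.inter_eq_left.mpr hFH, hFMH', Set.ncard_empty] at hH
  have := hiii _ H H' hM' hpair
  have := hiv _ H H' hM' hpair (by omega)
  have := (Set.ncard_pos (Set.toFinite _)).mpr hne
  omega

end Matching

namespace SimpleGraph.Walk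

variable {G : SimpleGraph V} {u v : V}

theorem mem_support_of_mem_of_mem_edges (p : G.Walk u v) {e : Sym2 V} {x : V}
    (he : e ∈ p.edges) (hx : x ∈ e) : x ∈ p.support := by
  rw [← Sym2.other_spec hx] at he
  exact p.fst_mem_support_of_mem_edges he

theorem start_mem_of_head?_edges {p : G.Walk u v} {e : Sym2 V} (he : p.edges.head? = some e) :
    u ∈ e := by
  cases p with
  | nil => simp at he
  | cons h q =>
    simp only [edges_cons, List.head?_cons, Option.some.injEq] at he
    exact he ▸ Sym2.mem_mk_left _ _

theorem end_mem_of_getLast?_edges {p : G.Walk u v} {e : Sym2 V}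
    (he : p.edges.getLast? = some e) : v ∈ e :=
  start_mem_of_head?_edges (p := p.reverse) (by rwa [edges_reverse, List.head?_reverse])

theorem exists_head?_edges {p : G.Walk u v} (hp : 0 < p.length) :
    ∃ e, p.edges.head? = some e :=
  Option.ne_none_iff_exists'.mp fun h => by
    rw [List.head?_eq_none_iff, ← List.length_eq_zero_iff, length_edges] at h
    omega

theorem exists_getLast?_edges {p : G.Walk u v} (hp : 0 < p.length) :
    ∃ e, p.edges.getLast? = some e :=
  Option.ne_none_iff_exists'.mp fun h => by
    rw [List.getLast?_eq_none_iff, ← List.length_eq_zero_iff, length_edges] at h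
    omega

theorem IsPath.head?_edges_eq_of_start_mem {p : G.Walk u v} (hp : p.IsPath) {e : Sym2 V}
    (he : e ∈ p.edges) (hu : u ∈ e) : p.edges.head? = some e := by
  cases p with
  | nil => simp at he
  | cons h q =>
    rcases List.mem_cons.mp (edges_cons h q ▸ he) with rfl | he
    · simp
    · exact absurd (q.mem_support_of_mem_of_mem_edges he hu) ((cons_isPath_iff h q).mp hp).2

theorem exists_mem_edges_of_isChain {M : Set (Sym2 V)} {p : G.Walk u v}
    (hp : p.edges.IsChain fun e f => ¬(e ∈ M ↔ f ∈ M)) {x : V} (hx : x ∈ p.support)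
    (hxu : x ≠ u) (hxv : x ≠ v) : ∃ g ∈ p.edges, g ∈ M ∧ x ∈ g := by
  induction p with
  | nil => exact absurd (by simpa using hx) hxu
  | @cons a b c h q ih =>
    rw [edges_cons, List.isChain_cons] at hp
    have hxq : x ∈ q.support := (List.mem_cons.mp (support_cons h q ▸ hx)).resolve_left hxu
    by_cases hxb : x = b
    · subst hxb
      -- `x` lies on `s(a, x)` and on the first edge of `q`, and these two alternate
      have hq : 0 < q.length := Nat.pos_of_ne_zero fun h0 => hxv (q.eq_of_length_eq_zero h0)
      obtain ⟨g, hg⟩ := exists_head?_edges hq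
      by_cases haM : s(a, x) ∈ M
      · exact ⟨s(a, x), by simp, haM, Sym2.mem_mk_right _ _⟩
      · have hiff := hp.1 g (by simp [hg])
        exact ⟨g, by simp [List.mem_of_head? hg], by tauto, start_mem_of_head?_edges hg⟩
    · obtain ⟨g, hg, hgM, hxg⟩ := ih hp.2 hxq hxb hxv
      exact ⟨g, by simp [hg], hgM, hxg⟩

theorem isSwapClosed_edges {M : Set (Sym2 V)} (hM : IsMatchingSet G M) {p : G.Walk u v}
    (hp : p.edges.IsChain fun e f => ¬(e ∈ M ↔ f ∈ M))
    (hu : ∀ g ∈ M, u ∈ g → g ∈ p.edges) (hv : ∀ g ∈ M, v ∈ g → g ∈ p.edges) :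
    IsSwapClosed M {e | e ∈ p.edges} := by
  intro f hf x hxf g hg hxg
  by_cases hxu : x = u
  · exact hu g hg (hxu ▸ hxg)
  by_cases hxv : x = v
  · exact hv g hg (hxv ▸ hxg)
  obtain ⟨g', hg', hg'M, hxg'⟩ :=
    exists_mem_edges_of_isChain hp (p.mem_support_of_mem_of_mem_edges hf hxf) hxu hxv
  exact (hM.eq_of_mem_of_mem hg hg'M hxg hxg') ▸ hg'

end SimpleGraph.Walk

theorem IsMaxAltPath.reverse {G : SimpleGraph V} {A B : Set (Sym2 V)} {u v : V}
    {p : G.Walk u v} (h : IsMaxAltPath G A B p) : IsMaxAltPath G A B p.reverse := by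
  obtain ⟨⟨hl, hp, ha⟩, hu, hv⟩ := h
  refine ⟨⟨by rwa [Walk.length_reverse], hp.reverse, by
    rw [Walk.edges_reverse]; exact ha.reverse⟩, hv, fun w hw => ?_⟩
  rw [Walk.reverse_reverse]
  exact hu w hw

namespace MaxIntersecting

variable [Finite V] {G : SimpleGraph V} {M H H' : Set (Sym2 V)}

theorem not_altList_of_isCycle (hmax : MaxIntersecting G M H H') {v : V} {c : G.Walk v v}
    (hc : c.IsCycle) : ¬AltList M H c.edges := by
  classical
  intro halt
  have hM := hmax.1.1
  have hpos : 0 < c.length := by have := hc.three_le_length; omega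
  obtain ⟨e, he⟩ := Walk.exists_head?_edges hpos
  obtain ⟨e', he'⟩ := Walk.exists_getLast?_edges hpos
  have hne : e ≠ e' := hc.edges_nodup.head?_ne_getLast?
    (by have := hc.three_le_length; rw [Walk.length_edges]; omega) he he'
  have hve := Walk.start_mem_of_head?_edges he
  have hve' := Walk.end_mem_of_getLast?_edges he'
  have hends : (e ∈ M ∧ e' ∉ M) ∨ (e ∉ M ∧ e' ∈ M) := by
    have hH : ¬(e ∈ H ∧ e' ∈ H) := fun h => hne (hmax.2.1.1.eq_of_mem_of_mem h.1 h.2 hve hve')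
    have := halt.1 e (List.mem_of_head? he)
    have := halt.1 e' (List.mem_of_getLast? he')
    by_cases heM : e ∈ M <;> by_cases he'M : e' ∈ M
    · exact absurd (hM.eq_of_mem_of_mem heM he'M hve hve') hne
    all_goals tauto
  have hv : ∀ g ∈ M, v ∈ g → g ∈ c.edges := by
    intro g hg hvg
    rcases hends with ⟨heM, -⟩ | ⟨-, he'M⟩
    · exact hM.eq_of_mem_of_mem hg heM hvg hve ▸ List.mem_of_head? he
    · exact hM.eq_of_mem_of_mem hg he'M hvg hve' ▸ List.mem_of_getLast? he'
  have hcount := halt.ncard_inter_add_one hc.edges_nodup he he'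
  have hnonempty : ({x | x ∈ c.edges} \ M).Nonempty := by
    rcases hends with ⟨-, he'M⟩ | ⟨heM, -⟩
    exacts [⟨e', List.mem_of_getLast? he', he'M⟩, ⟨e, List.mem_of_head? he, heM⟩]
  have hlt := hmax.ncard_diff_lt halt.subset_symmDiff
    (Walk.isSwapClosed_edges hM halt.2 hv hv) hnonempty
  rcases hends with ⟨heM, he'M⟩ | ⟨heM, he'M⟩ <;>
    simp only [heM, he'M, if_true, if_false] at hcount <;> omega

theorem start_not_mem_of_head?_not_mem (hmax : MaxIntersecting G M H H') {u v : V}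
    {p : G.Walk u v} (hp : IsMaxAltPath G M H p) {e : Sym2 V} (he : p.edges.head? = some e)
    (heM : e ∉ M) {g : Sym2 V} (hg : g ∈ M) : u ∉ g := by
  classical
  intro hug
  obtain ⟨⟨-, hpath, halt⟩, hext, -⟩ := hp
  have hue := Walk.start_mem_of_head?_edges he
  have heH : e ∈ H := ((halt.1 e (List.mem_of_head? he)).resolve_left fun h => heM h.1).1
  have hgH : g ∉ H := fun hgH => heM (hmax.2.1.1.eq_of_mem_of_mem hgH heH hug hue ▸ hg)
  have hgp : g ∉ p.edges := fun hgp => heM <| Option.some_injective _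
    ((hpath.head?_edges_eq_of_start_mem hgp hug).symm.trans he) ▸ hg
  obtain ⟨w, rfl⟩ := Sym2.mem_iff_exists.mp hug
  have hadj : G.Adj w u := (hmax.1.1.1 hg).symm
  have hcons : ∀ l, l <+: p.edges → AltList M H (s(w, u) :: l) := by
    refine fun l hl => (halt.of_isPrefix hl).cons (Sym2.eq_swap ▸ hg) (Sym2.eq_swap ▸ hgH) ?_
    intro f hf
    obtain ⟨t, ht⟩ := hl
    rw [← ht, List.head?_append, Option.mem_def.mp hf, Option.some_or] at he
    exact Option.some_injective _ he ▸ heM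
  by_cases hw : w ∈ p.support
  · refine hmax.not_altList_of_isCycle ((Walk.cons_isCycle_iff _ hadj).mpr
      ⟨hpath.takeUntil hw, fun h => hgp (Sym2.eq_swap ▸ p.edges_takeUntil_subset_edges hw h)⟩) ?_
    rw [Walk.edges_cons]
    exact hcons _ ⟨(p.dropUntil w hw).edges, by rw [← Walk.edges_append, Walk.take_spec]⟩
  · exact hext w hadj ⟨by simp, hpath.cons hw, hcons _ (List.prefix_refl _)⟩

theorem start_mem_edges_of_isMaxAltPath (hmax : MaxIntersecting G M H H') {u v : V}
    {p : G.Walk u v} (hp : IsMaxAltPath G M H p) {g : Sym2 V} (hg : g ∈ M) (hug : u ∈ g) :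
    g ∈ p.edges := by
  obtain ⟨e, he⟩ := Walk.exists_head?_edges hp.1.1
  by_cases heM : e ∈ M
  · exact hmax.1.1.eq_of_mem_of_mem hg heM hug (Walk.start_mem_of_head?_edges he) ▸
      List.mem_of_head? he
  · exact absurd hug (hmax.start_not_mem_of_head?_not_mem hp he heM hg)

theorem isSwapClosed_edges_of_isMaxAltPath (hmax : MaxIntersecting G M H H') {u v : V}
    {p : G.Walk u v} (hp : IsMaxAltPath G M H p) : IsSwapClosed M {e | e ∈ p.edges} :=
  Walk.isSwapClosed_edges hmax.1.1 hp.1.2.2.2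
    (fun _ hg hug => hmax.start_mem_edges_of_isMaxAltPath hp hg hug)
    (fun _ hg hvg => by
      simpa [Walk.edges_reverse] using hmax.start_mem_edges_of_isMaxAltPath hp.reverse hg hvg)

theorem head?_edges_mem (hmax : MaxIntersecting G M H H') {u v : V} {p : G.Walk u v}
    (hp : IsMaxAltPath G M H p) {e : Sym2 V} (he : p.edges.head? = some e) : e ∈ M := by
  classical
  by_contra heM
  obtain ⟨e', he'⟩ := Walk.exists_getLast?_edges hp.1.1
  have hcount := hp.1.2.2.ncard_inter_add_one hp.1.2.1.isTrail.edges_nodup he he'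
  have hlt := hmax.ncard_diff_lt hp.1.2.2.subset_symmDiff
    (hmax.isSwapClosed_edges_of_isMaxAltPath hp) ⟨e, List.mem_of_head? he, heM⟩
  rw [if_neg heM] at hcount
  split_ifs at hcount <;> omega

end MaxIntersecting

theorem stmt_10_general [Fintype V] (G : SimpleGraph V)
    (M H H' : Set (Sym2 V)) (hmax : MaxIntersecting G M H H') :
    (∀ (v : V) (w : G.Walk v v), w.IsCycle → ¬ AltList M H w.edges) ∧
    (∀ (u v : V) (p : G.Walk u v), IsMaxAltPath G M H p →
      Odd p.length ∧ (∀ e, p.edges.head? = some e → e ∈ M) ∧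
        (∀ e, p.edges.getLast? = some e → e ∈ M)) := by
  classical
  refine ⟨fun v c hc => hmax.not_altList_of_isCycle hc, fun u v p hp => ?_⟩
  have hhead : ∀ e, p.edges.head? = some e → e ∈ M := fun e he => hmax.head?_edges_mem hp he
  have hlast : ∀ e, p.edges.getLast? = some e → e ∈ M := fun e he =>
    hmax.head?_edges_mem hp.reverse (by rwa [Walk.edges_reverse, List.head?_reverse])
  obtain ⟨e, he⟩ := Walk.exists_head?_edges hp.1.1
  obtain ⟨e', he'⟩ := Walk.exists_getLast?_edges hp.1.1
  have hcount := List.countP_add_one_of_isChain_not_iff hp.1.2.2.2 he he'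
  rw [if_pos (hhead e he), if_pos (hlast e' he')] at hcount
  have hlen := List.length_eq_countP_add_countP (fun x => decide (x ∈ M)) (l := p.edges)
  simp only [decide_eq_true_eq, Walk.length_edges] at hlen
  exact ⟨⟨p.edges.countP (fun x => decide (x ∉ M)), by omega⟩, hhead, hlast⟩

/-- For maximally intersecting matchings `M`, `H`, `H'` of a finite connected
graph `G`, every maximal `M`-`H` alternating chain is a path with an odd number of edges
whose two end-edges belong to `M`; i.e., there is no `M`-`H` alternating cycle, and every
maximal `M`-`H` alternating path is odd with end-edges in `M`. -/
theorem stmt_10 [Fintype V] (G : SimpleGraph V) (hconn : G.Connected)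
    (M H H' : Set (Sym2 V)) (hmax : MaxIntersecting G M H H') :
    (∀ (v : V) (w : G.Walk v v), w.IsCycle → ¬ AltList M H w.edges) ∧
    (∀ (u v : V) (p : G.Walk u v), IsMaxAltPath G M H p →
      Odd p.length ∧ (∀ e, p.edges.head? = some e → e ∈ M) ∧
        (∀ e, p.edges.getLast? = some e → e ∈ M)) :=
  stmt_10_general G M H H' hmax
end

section
/- Let G be a finite connected graph and let M, H, H' be maximally intersecting matchings in G. Then every vertex lying on a maximal M-H alternating path is incident to an edge of H'. -/
variable {V : Type*}

lemma exists_edge_of_mem_support {G : SimpleGraph V} {u v : V} (p : G.Walk u v)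
    (hl : 0 < p.length) {x : V} (hx : x ∈ p.support) : ∃ e ∈ p.edges, x ∈ e := by
  induction p with
  | nil => simp at hl
  | @cons a b c h q ih =>
    rw [SimpleGraph.Walk.support_cons] at hx
    rcases List.mem_cons.mp hx with rfl | hx
    · exact ⟨s(x, b), by simp, Sym2.mem_mk_left _ _⟩
    · rcases Nat.eq_zero_or_pos q.length with h0 | hpos
      · have hxb : x = b := by
          cases q with
          | nil => simpa using hx
          | cons h' q' => simp [SimpleGraph.Walk.length_cons] at h0
        exact ⟨s(a, b), by simp, hxb ▸ Sym2.mem_mk_right _ _⟩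
      · obtain ⟨e, he, hxe⟩ := ih hpos hx
        exact ⟨e, by simp [he], hxe⟩

section Aux
variable [Fintype V]

lemma aux_ncard_le (A : Set (Sym2 V)) : A.ncard ≤ Nat.card (Sym2 V) := by
  rw [← Set.ncard_univ]
  exact Set.ncard_le_ncard (Set.subset_univ A) Set.finite_univ

lemma aux_le_lambda (G : SimpleGraph V) {A B : Set (Sym2 V)} (hA : IsMatchingSet G A)
    (hB : IsMatchingSet G B) (hd : Disjoint A B) : A.ncard + B.ncard ≤ lambdaParam G := by
  apply le_csSup
  · refine ⟨2 * Nat.card (Sym2 V), ?_⟩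
    rintro n ⟨C, D, hC, hD, -, rfl⟩
    have h1 := aux_ncard_le (V := V) C
    have h2 := aux_ncard_le (V := V) D
    omega
  · exact ⟨A, B, hA, hB, hd, rfl⟩

/-- Swap lemma for `H'`: an `M`-edge outside `H ∪ H'` with an `H'`-uncovered endpoint
is impossible. -/
lemma aux_lemA (G : SimpleGraph V) (M H H' : Set (Sym2 V))
    (hM : IsMaxMatching G M) (hpair : IsLambdaMuPair G H H')
    (hiii : ∀ M₂ H₂ H₂' : Set (Sym2 V), IsMaxMatching G M₂ → IsLambdaMuPair G H₂ H₂' →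
      (M₂ ∩ (H₂ ∪ H₂')).ncard ≤ (M ∩ (H ∪ H')).ncard)
    (x y : V) (hm : s(x,y) ∈ M) (hmH : s(x,y) ∉ H) (hmH' : s(x,y) ∉ H')
    (hx : ∀ e ∈ H', x ∉ e) : False := by
  obtain ⟨hH, hH', hdisj, hlam, hmu⟩ := hpair
  by_cases hy : ∃ f ∈ H', y ∈ f
  · obtain ⟨f, hf, hyf⟩ := hy
    have hfm : f ≠ s(x,y) := fun h => hmH' (h ▸ hf)
    by_cases hfM : f ∈ M
    · exact hM.1.2 f hfM _ hm hfm y ⟨hyf, Sym2.mem_mk_right x y⟩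
    · have hmatch : IsMatchingSet G (insert s(x,y) (H' \ {f})) := by
        constructor
        · rintro g hg
          rcases Set.mem_insert_iff.mp hg with rfl | hg'
          · exact hM.1.1 hm
          · exact hH'.1 hg'.1
        · intro e1 he1 e2 he2 hne v hv
          rcases Set.mem_insert_iff.mp he1 with rfl | he1'
          · rcases Set.mem_insert_iff.mp he2 with rfl | he2'
            · exact hne rfl
            · rcases Sym2.mem_iff.mp hv.1 with rfl | rfl
              · exact hx e2 he2'.1 hv.2
              · exact hH'.2 e2 he2'.1 f hf (fun h => he2'.2 (Set.mem_singleton_iff.mpr h))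
                  v ⟨hv.2, hyf⟩
          · rcases Set.mem_insert_iff.mp he2 with rfl | he2'
            · rcases Sym2.mem_iff.mp hv.2 with rfl | rfl
              · exact hx e1 he1'.1 hv.1
              · exact hH'.2 e1 he1'.1 f hf (fun h => he1'.2 (Set.mem_singleton_iff.mpr h))
                  v ⟨hv.1, hyf⟩
            · exact hH'.2 e1 he1'.1 e2 he2'.1 hne v hv
      have hdisj'' : Disjoint H (insert s(x,y) (H' \ {f})) := by
        rw [Set.disjoint_left]
        intro g hgH hgH''
        rcases Set.mem_insert_iff.mp hgH'' with rfl | hg'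
        · exact hmH hgH
        · exact (Set.disjoint_left.mp hdisj hgH) hg'.1
      have hmnot : s(x,y) ∉ H' \ {f} := fun h => hmH' h.1
      have hcard : (insert s(x,y) (H' \ {f})).ncard = H'.ncard := by
        rw [Set.ncard_insert_of_notMem hmnot]
        exact Set.ncard_diff_singleton_add_one hf
      have hpair'' : IsLambdaMuPair G H (insert s(x,y) (H' \ {f})) :=
        ⟨hH, hmatch, hdisj'', by rw [hcard]; exact hlam, hmu⟩
      have hle := hiii M H (insert s(x,y) (H' \ {f})) hM hpair''
      have hseteq : M ∩ (H ∪ insert s(x,y) (H' \ {f})) = insert s(x,y) (M ∩ (H ∪ H')) := by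
        ext g
        constructor
        · rintro ⟨hgM, hgU⟩
          rcases hgU with hgH | hgI
          · exact Set.mem_insert_iff.mpr (Or.inr ⟨hgM, Or.inl hgH⟩)
          · rcases Set.mem_insert_iff.mp hgI with rfl | hg'
            · exact Set.mem_insert _ _
            · exact Set.mem_insert_iff.mpr (Or.inr ⟨hgM, Or.inr hg'.1⟩)
        · intro hg
          rcases Set.mem_insert_iff.mp hg with rfl | ⟨hgM, hgU⟩
          · exact ⟨hm, Or.inr (Set.mem_insert _ _)⟩
          · rcases hgU with hgH | hgH'
            · exact ⟨hgM, Or.inl hgH⟩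
            · exact ⟨hgM, Or.inr (Set.mem_insert_iff.mpr
                (Or.inr ⟨hgH', fun h => hfM ((Set.mem_singleton_iff.mp h) ▸ hgM)⟩))⟩
      have hmnotin : s(x,y) ∉ M ∩ (H ∪ H') := fun h => h.2.elim hmH hmH'
      rw [hseteq, Set.ncard_insert_of_notMem hmnotin] at hle
      omega
  · push_neg at hy
    have hmatch : IsMatchingSet G (insert s(x,y) H') := by
      constructor
      · rintro g hg
        rcases Set.mem_insert_iff.mp hg with rfl | hg'
        · exact hM.1.1 hm
        · exact hH'.1 hg'
      · intro e1 he1 e2 he2 hne v hv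
        rcases Set.mem_insert_iff.mp he1 with rfl | he1'
        · rcases Set.mem_insert_iff.mp he2 with rfl | he2'
          · exact hne rfl
          · rcases Sym2.mem_iff.mp hv.1 with rfl | rfl
            · exact hx e2 he2' hv.2
            · exact hy e2 he2' hv.2
        · rcases Set.mem_insert_iff.mp he2 with rfl | he2'
          · rcases Sym2.mem_iff.mp hv.2 with rfl | rfl
            · exact hx e1 he1' hv.1
            · exact hy e1 he1' hv.1
          · exact hH'.2 e1 he1' e2 he2' hne v hv
    have hdisj'' : Disjoint H (insert s(x,y) H') := by
      rw [Set.disjoint_left]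
      intro g hgH hgH''
      rcases Set.mem_insert_iff.mp hgH'' with rfl | hg'
      · exact hmH hgH
      · exact (Set.disjoint_left.mp hdisj hgH) hg'
    have hle := aux_le_lambda G hH hmatch hdisj''
    rw [Set.ncard_insert_of_notMem hmH'] at hle
    omega

/-- Swap lemma for `M`: an `H`-edge outside `M` whose endpoint `x` is `M`-uncovered
is impossible. -/
lemma aux_lemB (G : SimpleGraph V) (M H H' : Set (Sym2 V))
    (hM : IsMaxMatching G M) (hpair : IsLambdaMuPair G H H')
    (hiii : ∀ M₂ H₂ H₂' : Set (Sym2 V), IsMaxMatching G M₂ → IsLambdaMuPair G H₂ H₂' →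
      (M₂ ∩ (H₂ ∪ H₂')).ncard ≤ (M ∩ (H ∪ H')).ncard)
    (hiv : ∀ M₂ H₂ H₂' : Set (Sym2 V), IsMaxMatching G M₂ → IsLambdaMuPair G H₂ H₂' →
      (M₂ ∩ (H₂ ∪ H₂')).ncard = (M ∩ (H ∪ H')).ncard → (M₂ ∩ H₂).ncard ≤ (M ∩ H).ncard)
    (x y : V) (heH : s(x,y) ∈ H) (heM : s(x,y) ∉ M)
    (hx : ∀ m ∈ M, x ∉ m) : False := by
  obtain ⟨hH, hH', hdisj, hlam, hmu⟩ := hpair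
  by_cases hy : ∃ m1 ∈ M, y ∈ m1
  · obtain ⟨m1, hm1, hym1⟩ := hy
    have hne : m1 ≠ s(x,y) := fun h => heM (h ▸ hm1)
    have hm1H : m1 ∉ H := fun h =>
      hH.2 m1 h _ heH hne y ⟨hym1, Sym2.mem_mk_right x y⟩
    have henotin : s(x,y) ∉ M \ {m1} := fun h => heM h.1
    have hmatch : IsMatchingSet G (insert s(x,y) (M \ {m1})) := by
      constructor
      · rintro g hg
        rcases Set.mem_insert_iff.mp hg with rfl | hg'
        · exact hH.1 heH
        · exact hM.1.1 hg'.1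
      · intro e1 he1 e2 he2 hnee v hv
        rcases Set.mem_insert_iff.mp he1 with rfl | he1'
        · rcases Set.mem_insert_iff.mp he2 with rfl | he2'
          · exact hnee rfl
          · rcases Sym2.mem_iff.mp hv.1 with rfl | rfl
            · exact hx e2 he2'.1 hv.2
            · exact hM.1.2 e2 he2'.1 m1 hm1 (fun h => he2'.2 (Set.mem_singleton_iff.mpr h))
                v ⟨hv.2, hym1⟩
        · rcases Set.mem_insert_iff.mp he2 with rfl | he2'
          · rcases Sym2.mem_iff.mp hv.2 with rfl | rfl
            · exact hx e1 he1'.1 hv.1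
            · exact hM.1.2 e1 he1'.1 m1 hm1 (fun h => he1'.2 (Set.mem_singleton_iff.mpr h))
                v ⟨hv.1, hym1⟩
          · exact hM.1.2 e1 he1'.1 e2 he2'.1 hnee v hv
    have hcard : (insert s(x,y) (M \ {m1})).ncard = M.ncard := by
      rw [Set.ncard_insert_of_notMem henotin]
      exact Set.ncard_diff_singleton_add_one hm1
    have hmax2 : IsMaxMatching G (insert s(x,y) (M \ {m1})) :=
      ⟨hmatch, fun M' hM' => hcard ▸ hM.2 M' hM'⟩
    have hpair' : IsLambdaMuPair G H H' := ⟨hH, hH', hdisj, hlam, hmu⟩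
    by_cases hm1H' : m1 ∈ H'
    · -- intersection with H∪H' preserved, intersection with H grows: contradict (iv)
      have hseteq : (insert s(x,y) (M \ {m1})) ∩ (H ∪ H')
          = insert s(x,y) ((M ∩ (H ∪ H')) \ {m1}) := by
        ext g
        constructor
        · rintro ⟨hgI, hgU⟩
          rcases Set.mem_insert_iff.mp hgI with rfl | hg'
          · exact Set.mem_insert _ _
          · exact Set.mem_insert_iff.mpr (Or.inr ⟨⟨hg'.1, hgU⟩, hg'.2⟩)
        · intro hg
          rcases Set.mem_insert_iff.mp hg with rfl | ⟨⟨hgM, hgU⟩, hgne⟩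
          · exact ⟨Set.mem_insert _ _, Or.inl heH⟩
          · exact ⟨Set.mem_insert_iff.mpr (Or.inr ⟨hgM, hgne⟩), hgU⟩
      have hm1in : m1 ∈ M ∩ (H ∪ H') := ⟨hm1, Or.inr hm1H'⟩
      have henotin2 : s(x,y) ∉ (M ∩ (H ∪ H')) \ {m1} := fun h => heM h.1.1
      have hintcard : ((insert s(x,y) (M \ {m1})) ∩ (H ∪ H')).ncard
          = (M ∩ (H ∪ H')).ncard := by
        rw [hseteq, Set.ncard_insert_of_notMem henotin2]
        exact Set.ncard_diff_singleton_add_one hm1in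
      have hle := hiv (insert s(x,y) (M \ {m1})) H H' hmax2 hpair' hintcard
      have hsetH : (insert s(x,y) (M \ {m1})) ∩ H = insert s(x,y) (M ∩ H) := by
        ext g
        constructor
        · rintro ⟨hgI, hgH⟩
          rcases Set.mem_insert_iff.mp hgI with rfl | hg'
          · exact Set.mem_insert _ _
          · exact Set.mem_insert_iff.mpr (Or.inr ⟨hg'.1, hgH⟩)
        · intro hg
          rcases Set.mem_insert_iff.mp hg with rfl | ⟨hgM, hgH⟩
          · exact ⟨Set.mem_insert _ _, heH⟩
          · exact ⟨Set.mem_insert_iff.mpr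
              (Or.inr ⟨hgM, fun h => hm1H ((Set.mem_singleton_iff.mp h) ▸ hgH)⟩), hgH⟩
      have henotinH : s(x,y) ∉ M ∩ H := fun h => heM h.1
      rw [hsetH, Set.ncard_insert_of_notMem henotinH] at hle
      omega
    · -- m1 ∉ H ∪ H': intersection with H∪H' grows: contradict (iii)
      have hseteq : (insert s(x,y) (M \ {m1})) ∩ (H ∪ H')
          = insert s(x,y) (M ∩ (H ∪ H')) := by
        ext g
        constructor
        · rintro ⟨hgI, hgU⟩
          rcases Set.mem_insert_iff.mp hgI with rfl | hg'
          · exact Set.mem_insert _ _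
          · exact Set.mem_insert_iff.mpr (Or.inr ⟨hg'.1, hgU⟩)
        · intro hg
          rcases Set.mem_insert_iff.mp hg with rfl | ⟨hgM, hgU⟩
          · exact ⟨Set.mem_insert _ _, Or.inl heH⟩
          · refine ⟨Set.mem_insert_iff.mpr (Or.inr ⟨hgM, fun h => ?_⟩), hgU⟩
            rcases (Set.mem_singleton_iff.mp h) ▸ hgU with h1 | h1
            · exact hm1H h1
            · exact hm1H' h1
      have henotin2 : s(x,y) ∉ M ∩ (H ∪ H') := fun h => heM h.1
      have hle := hiii (insert s(x,y) (M \ {m1})) H H' hmax2 hpair'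
      rw [hseteq, Set.ncard_insert_of_notMem henotin2] at hle
      omega
  · push_neg at hy
    have hmatch : IsMatchingSet G (insert s(x,y) M) := by
      constructor
      · rintro g hg
        rcases Set.mem_insert_iff.mp hg with rfl | hg'
        · exact hH.1 heH
        · exact hM.1.1 hg'
      · intro e1 he1 e2 he2 hnee v hv
        rcases Set.mem_insert_iff.mp he1 with rfl | he1'
        · rcases Set.mem_insert_iff.mp he2 with rfl | he2'
          · exact hnee rfl
          · rcases Sym2.mem_iff.mp hv.1 with rfl | rfl
            · exact hx e2 he2' hv.2
            · exact hy e2 he2' hv.2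
        · rcases Set.mem_insert_iff.mp he2 with rfl | he2'
          · rcases Sym2.mem_iff.mp hv.2 with rfl | rfl
            · exact hx e1 he1' hv.1
            · exact hy e1 he1' hv.1
          · exact hM.1.2 e1 he1' e2 he2' hnee v hv
    have hle := hM.2 (insert s(x,y) M) hmatch
    rw [Set.ncard_insert_of_notMem heM] at hle
    omega

end Aux

/-- For maximally intersecting matchings `M`, `H`, `H'` of a finite connected
graph `G`, every vertex lying on a maximal `M`-`H` alternating path is incident to an edge
of `H'`. -/
theorem stmt_12 [Fintype V] (G : SimpleGraph V) (hconn : G.Connected)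
    (M H H' : Set (Sym2 V)) (hmax : MaxIntersecting G M H H') :
    ∀ (u v : V) (p : G.Walk u v), IsMaxAltPath G M H p →
      ∀ x ∈ p.support, ∃ e ∈ H', x ∈ e := by
  obtain ⟨hM, hpair, hiii, hiv⟩ := hmax
  intro u v p hp x hx
  by_contra hxc
  push_neg at hxc
  obtain ⟨e, heP, hxe⟩ := exists_edge_of_mem_support p hp.1.1 hx
  obtain ⟨y, rfl⟩ := Sym2.mem_iff_exists.mp hxe
  rcases hp.1.2.2.1 _ heP with ⟨heM, heH⟩ | ⟨heH, heM⟩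
  · have heH' : s(x,y) ∉ H' := fun h => hxc _ h hxe
    exact aux_lemA G M H H' hM hpair hiii x y heM heH heH' hxc
  · by_cases hxM : ∃ m ∈ M, x ∈ m
    · obtain ⟨m, hmM, hxm⟩ := hxM
      obtain ⟨z, rfl⟩ := Sym2.mem_iff_exists.mp hxm
      have hmH : s(x,z) ∉ H := fun h => heM (by
        have heq : s(x,z) = s(x,y) := by
          by_contra hne
          exact hpair.1.2 _ h _ heH hne x ⟨Sym2.mem_mk_left _ _, Sym2.mem_mk_left _ _⟩
        exact heq ▸ hmM)
      have hmH' : s(x,z) ∉ H' := fun h => hxc _ h (Sym2.mem_mk_left _ _)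
      exact aux_lemA G M H H' hM hpair hiii x z hmM hmH hmH' hxc
    · push_neg at hxM
      exact aux_lemB G M H H' hM hpair hiii hiv x y heH heM hxM
end
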